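/- D_1 ∩ (0, 1) = ∅. -/

import Mathlib

open Filter Topology

noncomputable section

/-- The value `Σ_{i≥0} d i / q^(i+1)` of a (0-indexed) digit sequence `d` in base `q`;
this corresponds to `((d_i)_{i≥1})_q` with `d_i = d (i-1)`. -/
def seqVal (q : ℝ) (d : ℕ → ℕ) : ℝ := ∑' i : ℕ, (d i : ℝ) / q ^ (i + 1)

/-- `d` is a `q`-expansion of `x` with digits in `{0,1}`. -/
def IsExpansion (q x : ℝ) (d : ℕ → ℕ) : Prop :=
  (∀ i, d i ≤ 1) ∧ x = seqVal q d

/-- `x` has a unique `q`-expansion. -/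
def HasUniqueExpansion (q x : ℝ) : Prop := ∃! d : ℕ → ℕ, IsExpansion q x d

/-- The set `U(x)` of univoque bases of `x`. -/
def UBases (x : ℝ) : Set ℝ := {q | 1 < q ∧ q < 2 ∧ HasUniqueExpansion q x}

/-- `q_s(x) = inf U(x)`. -/
def qs (x : ℝ) : ℝ := sInf (UBases x)

/-- The univoque set `U_q` of `x ∈ [0, 1/(q-1)]` with a unique `q`-expansion. -/
def Uset (q : ℝ) : Set ℝ :=
  {x | x ∈ Set.Icc 0 (1 / (q - 1)) ∧ HasUniqueExpansion q x}

/-- The set `U_q'` of digit sequences which are the unique `q`-expansion of their value. -/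
def USeq (q : ℝ) : Set (ℕ → ℕ) :=
  {d | (∀ i, d i ≤ 1) ∧ ∀ e : ℕ → ℕ, IsExpansion q (seqVal q d) e → e = d}

/-- The Thue–Morse sequence: `τ 0 = 0`, `τ (2n) = τ n`, `τ (2n+1) = 1 - τ n`. -/
def IsThueMorse (τ : ℕ → ℕ) : Prop :=
  τ 0 = 0 ∧ (∀ n, τ (2 * n) = τ n) ∧ ∀ n, τ (2 * n + 1) = 1 - τ n

/-- `q` is the Komornik–Loreti constant: the base in `(1,2)` with `1 = Σ_{i≥1} τ_i q^{-i}`. -/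
def IsKL (τ : ℕ → ℕ) (q : ℝ) : Prop :=
  1 < q ∧ q < 2 ∧ (1 : ℝ) = ∑' i : ℕ, (τ (i + 1) : ℝ) / q ^ (i + 1)

/-- `Q` is the sequence of bases `q_n`: `Q 0 = 1` and for `n ≥ 1`, `Q n` is the root in
`(1,2)` of `1 = Σ_{i=1}^{2^n} τ_i q^{-i}`. -/
def IsBaseSeq (τ : ℕ → ℕ) (Q : ℕ → ℝ) : Prop :=
  Q 0 = 1 ∧ ∀ n, 1 ≤ n → 1 < Q n ∧ Q n < 2 ∧
    (1 : ℝ) = ∑ i ∈ Finset.range (2 ^ n), (τ (i + 1) : ℝ) / (Q n) ^ (i + 1)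

/-- `D_n = ⋃_{q ∈ (q_{n-1}, q_n]} U_q`. -/
def D (Q : ℕ → ℝ) (n : ℕ) : Set ℝ := ⋃ q ∈ Set.Ioc (Q (n - 1)) (Q n), Uset q

/-- The golden ratio. -/
def qG : ℝ := (1 + Real.sqrt 5) / 2

/-- Strict lexicographical order on digit sequences. -/
def seqLt (c d : ℕ → ℕ) : Prop := ∃ n, (∀ i, i < n → c i = d i) ∧ c n < d n

/-- The word `τ_1 ⋯ τ_m`. -/
def tmPrefix (τ : ℕ → ℕ) (m : ℕ) : List ℕ := (List.range m).map fun i => τ (i + 1)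

/-- `w⁻`: decrease the last digit of a word by 1. -/
def lastDec (w : List ℕ) : List ℕ := w.dropLast ++ [w.getLastD 0 - 1]

/-- `w⁺`: increase the last digit of a word by 1. -/
def lastInc (w : List ℕ) : List ℕ := w.dropLast ++ [w.getLastD 0 + 1]

/-- The reflection of a word. -/
def reflect (w : List ℕ) : List ℕ := w.map fun d => 1 - d

/-- The infinite sequence given by the prefix `p` followed by periodic repetition of `w`. -/
def prefPeriodic (p w : List ℕ) : ℕ → ℕ := fun j =>
  if j < p.length then p.getD j 0 else w.getD ((j - p.length) % w.length) 0

/-- `z_n = ((τ_1⋯τ_{2^{n-1}})(τ_{2^{n-1}+1}⋯τ_{2^n})^∞)_{q_n}`. -/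
def zVal (τ : ℕ → ℕ) (Q : ℕ → ℝ) (n : ℕ) : ℝ :=
  seqVal (Q n) (prefPeriodic (tmPrefix τ (2 ^ (n - 1)))
    ((List.range (2 ^ (n - 1))).map fun i => τ (2 ^ (n - 1) + (i + 1))))

/-- `z_{1,k} = Σ_{i=1}^k q_G^{-i} + 1/(q_G^k (q_G^2 - 1))`. -/
def z1 (k : ℕ) : ℝ :=
  (∑ i ∈ Finset.range k, 1 / qG ^ (i + 1)) + 1 / (qG ^ k * (qG ^ 2 - 1))

/-!
Since `q_1 = q_G`, it suffices that for `q ≤ q_G` no `x ∈ (0, 1)` has a unique expansion. If `d`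
is the unique expansion of `x`, no digit can be changed, which forces every tail after a `0` to be
`< 1` and every tail after a `1` to be `> 1/(q-1) - 1`. A block `10` would make the tail after that
`1` smaller than `1/q`, and `1/q ≤ 1/(q-1) - 1` exactly when `q² ≤ q + 1`. So after its first `1`
the expansion is `1^∞`, whose value `1/(q-1) ≥ 1` is too large both for `x < 1` and for a tail
after a `0`.
-/

variable {q : ℝ}

lemma summable_digits (hq : 1 < q) {d : ℕ → ℕ} (hd : ∀ i, d i ≤ 1) :
    Summable fun i => (d i : ℝ) / q ^ (i + 1) := by
  have hq0 : 0 < q := by linarith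
  refine (summable_geometric_of_lt_one (inv_nonneg.2 hq0.le)
    (inv_lt_one_of_one_lt₀ hq)).of_nonneg_of_le (fun i => by positivity) fun i => ?_
  calc (d i : ℝ) / q ^ (i + 1) ≤ 1 / q ^ i := by
        gcongr
        · exact_mod_cast hd i
        · exact hq.le
        · omega
    _ = q⁻¹ ^ i := by rw [one_div, inv_pow]

lemma seqVal_nonneg (hq : 0 ≤ q) (d : ℕ → ℕ) : 0 ≤ seqVal q d :=
  tsum_nonneg fun _ => by positivity

lemma seqVal_const_one (hq : 1 < q) : seqVal q (fun _ => 1) = 1 / (q - 1) := by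
  have hq0 : q ≠ 0 := by positivity
  have h : ∀ i : ℕ, ((1 : ℕ) : ℝ) / q ^ (i + 1) = q⁻¹ ^ i * q⁻¹ := fun i => by
    rw [Nat.cast_one, one_div, ← inv_pow, pow_succ]
  rw [seqVal, tsum_congr h, tsum_mul_right,
    tsum_geometric_of_lt_one (by positivity) (inv_lt_one_of_one_lt₀ hq)]
  have : q - 1 ≠ 0 := by linarith
  field_simp

lemma seqVal_le (hq : 1 < q) {d : ℕ → ℕ} (hd : ∀ i, d i ≤ 1) : seqVal q d ≤ 1 / (q - 1) := by
  rw [← seqVal_const_one hq]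
  refine (summable_digits hq hd).tsum_le_tsum (fun i => ?_) (summable_digits hq fun _ => le_rfl)
  gcongr
  exact_mod_cast hd i

lemma seqVal_eq_sum_add_shift (hq : 1 < q) {d : ℕ → ℕ} (hd : ∀ i, d i ≤ 1) (k : ℕ) :
    seqVal q d = ∑ i ∈ Finset.range k, (d i : ℝ) / q ^ (i + 1)
      + seqVal q (fun j => d (k + j)) / q ^ k := by
  rw [seqVal, ← (summable_digits hq hd).sum_add_tsum_nat_add k, seqVal, ← tsum_div_const]
  congr 1
  refine tsum_congr fun i => ?_
  rw [add_comm i k, div_div, ← pow_add]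
  congr 2
  omega

def greedyDigit (q r : ℝ) : ℕ := if 1 ≤ q * r then 1 else 0

def greedyRem (q x : ℝ) : ℕ → ℝ
  | 0 => x
  | n + 1 => q * greedyRem q x n - greedyDigit q (greedyRem q x n)

lemma greedyDigit_le_one (q r : ℝ) : greedyDigit q r ≤ 1 := by
  unfold greedyDigit; split <;> omega

lemma greedyRem_mem_Icc (hq : 1 < q) (hq2 : q ≤ 2) {x : ℝ} (hx : x ∈ Set.Icc 0 (1 / (q - 1)))
    (n : ℕ) : greedyRem q x n ∈ Set.Icc 0 (1 / (q - 1)) := by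
  induction n with
  | zero => exact hx
  | succ n ih =>
    obtain ⟨h0, h1⟩ := ih
    have hq1 : 0 < q - 1 := by linarith
    have hqr : q * greedyRem q x n ≤ 1 + 1 / (q - 1) := by
      calc q * greedyRem q x n ≤ q * (1 / (q - 1)) := by gcongr
        _ = 1 + 1 / (q - 1) := by field_simp; ring
    have hone : 1 ≤ 1 / (q - 1) := by rw [le_div_iff₀ hq1]; linarith
    simp only [greedyRem, greedyDigit]
    split_ifs with h
    · constructor <;> push_cast <;> linarith
    · constructor <;> push_cast <;> nlinarith

lemma sum_add_greedyRem (hq : q ≠ 0) (x : ℝ) (n : ℕ) :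
    ∑ i ∈ Finset.range n, (greedyDigit q (greedyRem q x i) : ℝ) / q ^ (i + 1)
      + greedyRem q x n / q ^ n = x := by
  induction n with
  | zero => simp [greedyRem]
  | succ n ih =>
    have hstep : (greedyDigit q (greedyRem q x n) : ℝ) / q ^ (n + 1)
        + (q * greedyRem q x n - greedyDigit q (greedyRem q x n)) / q ^ (n + 1)
        = greedyRem q x n / q ^ n := by
      rw [pow_succ]; field_simp; ring
    rw [Finset.sum_range_succ, greedyRem]
    linarith

lemma exists_isExpansion (hq : 1 < q) (hq2 : q ≤ 2) {x : ℝ}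
    (hx : x ∈ Set.Icc 0 (1 / (q - 1))) : ∃ d, IsExpansion q x d := by
  set d := fun n => greedyDigit q (greedyRem q x n)
  have hd : ∀ i, d i ≤ 1 := fun i => greedyDigit_le_one _ _
  refine ⟨d, hd, tendsto_nhds_unique ?_ (summable_digits hq hd).hasSum.tendsto_sum_nat⟩
  have hq0 : 0 < q := by linarith
  have hrem : Tendsto (fun n : ℕ => greedyRem q x n / q ^ n) atTop (𝓝 0) := by
    have hgeom : Tendsto (fun n : ℕ => 1 / (q - 1) * q⁻¹ ^ n) atTop (𝓝 0) := by
      simpa using (tendsto_pow_atTop_nhds_zero_of_lt_one (inv_nonneg.2 hq0.le)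
        (inv_lt_one_of_one_lt₀ hq)).const_mul (1 / (q - 1))
    refine squeeze_zero (fun n => div_nonneg (greedyRem_mem_Icc hq hq2 hx n).1 (by positivity))
      (fun n => ?_) hgeom
    rw [inv_pow, ← div_eq_mul_inv]
    gcongr
    exact (greedyRem_mem_Icc hq hq2 hx n).2
  have hsum : ∀ n, ∑ i ∈ Finset.range n, (d i : ℝ) / q ^ (i + 1)
      = x - greedyRem q x n / q ^ n := fun n =>
    eq_sub_of_add_eq (sum_add_greedyRem hq0.ne' x n)
  simpa [hsum] using tendsto_const_nhds.sub hrem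

def splice (d : ℕ → ℕ) (n b : ℕ) (g : ℕ → ℕ) (i : ℕ) : ℕ :=
  if i < n then d i else if i = n then b else g (i - (n + 1))

lemma splice_le_one {d g : ℕ → ℕ} {n b : ℕ} (hd : ∀ i, d i ≤ 1) (hb : b ≤ 1)
    (hg : ∀ i, g i ≤ 1) (i : ℕ) : splice d n b g i ≤ 1 := by
  unfold splice; split_ifs <;> simp [*]

lemma seqVal_splice (hq : 1 < q) {d g : ℕ → ℕ} {n b : ℕ} (hd : ∀ i, d i ≤ 1) (hb : b ≤ 1)
    (hg : ∀ i, g i ≤ 1) :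
    seqVal q (splice d n b g) = ∑ i ∈ Finset.range n, (d i : ℝ) / q ^ (i + 1)
      + (b + seqVal q g) / q ^ (n + 1) := by
  rw [seqVal_eq_sum_add_shift hq (splice_le_one hd hb hg) (n + 1), Finset.sum_range_succ,
    add_assoc, add_div]
  have htail : (fun j => splice d n b g (n + 1 + j)) = g := funext fun j => by
    simp [splice, show ¬ n + 1 + j < n by omega, show n + 1 + j ≠ n by omega]
  congr 1
  · exact Finset.sum_congr rfl fun i hi => by simp [splice, Finset.mem_range.1 hi]
  · rw [htail]
    simp [splice]

/-- Otherwise replacing digit `n` by `b` and the tail by an expansion of this number would give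
a second expansion of `x`. -/
lemma digit_sub_add_tail_notMem_Icc (hq : 1 < q) (hq2 : q ≤ 2) {x : ℝ}
    (hx : HasUniqueExpansion q x) {d : ℕ → ℕ} (hd : IsExpansion q x d) {n b : ℕ} (hb : b ≤ 1)
    (hbn : b ≠ d n) :
    (d n : ℝ) - b + seqVal q (fun j => d (n + 1 + j)) ∉ Set.Icc 0 (1 / (q - 1)) := by
  intro hmem
  obtain ⟨g, hg, hgv⟩ := exists_isExpansion hq hq2 hmem
  have hsplice : IsExpansion q x (splice d n b g) := by
    refine ⟨splice_le_one hd.1 hb hg, ?_⟩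
    rw [seqVal_splice hq hd.1 hb hg, ← hgv, hd.2, seqVal_eq_sum_add_shift hq hd.1 (n + 1),
      Finset.sum_range_succ]
    ring
  apply hbn
  simpa [splice] using congrFun (hx.unique hsplice hd) n

lemma tail_lt_one_of_digit_eq_zero (hq : 1 < q) (hq2 : q ≤ 2) {x : ℝ}
    (hx : HasUniqueExpansion q x) {d : ℕ → ℕ} (hd : IsExpansion q x d) {n : ℕ} (hn : d n = 0) :
    seqVal q (fun j => d (n + 1 + j)) < 1 := by
  have h := digit_sub_add_tail_notMem_Icc hq hq2 hx hd (n := n) (b := 1) le_rfl (by omega)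
  have hle := seqVal_le hq fun j => hd.1 (n + 1 + j)
  simp only [hn, Set.mem_Icc, not_and_or, not_le] at h
  push_cast at h
  rcases h with h | h <;> linarith

lemma tail_gt_of_digit_eq_one (hq : 1 < q) (hq2 : q ≤ 2) {x : ℝ}
    (hx : HasUniqueExpansion q x) {d : ℕ → ℕ} (hd : IsExpansion q x d) {n : ℕ} (hn : d n = 1) :
    1 / (q - 1) - 1 < seqVal q (fun j => d (n + 1 + j)) := by
  have h := digit_sub_add_tail_notMem_Icc hq hq2 hx hd (n := n) (b := 0) (by omega) (by omega)
  have hnn := seqVal_nonneg (by linarith) fun j => d (n + 1 + j)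
  simp only [hn, Set.mem_Icc, not_and_or, not_le] at h
  push_cast at h
  rcases h with h | h <;> linarith

lemma digit_succ_eq_one_of_sq_le (hq : 1 < q) (hqG : q ^ 2 ≤ q + 1) {x : ℝ}
    (hx : HasUniqueExpansion q x) {d : ℕ → ℕ} (hd : IsExpansion q x d) {n : ℕ} (hn : d n = 1) :
    d (n + 1) = 1 := by
  have hq2 : q ≤ 2 := by nlinarith
  by_contra hne
  have hzero : d (n + 1) = 0 := by have := hd.1 (n + 1); omega
  have hlow := tail_gt_of_digit_eq_one hq hq2 hx hd hn
  have hnext := tail_lt_one_of_digit_eq_zero hq hq2 hx hd hzero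
  have hsplit : seqVal q (fun j => d (n + 1 + j))
      = seqVal q (fun j => d (n + 1 + 1 + j)) / q := by
    have hshift : (fun j => d (n + 1 + (1 + j))) = fun j => d (n + 1 + 1 + j) :=
      funext fun j => by rw [← add_assoc]
    rw [seqVal_eq_sum_add_shift hq (fun j => hd.1 (n + 1 + j)) 1, hshift]
    simp [hzero]
  have hq0 : 0 < q := by linarith
  have hq1 : 0 < q - 1 := by linarith
  have : 1 / (q - 1) - 1 < 1 / q := by
    rw [hsplit] at hlow
    exact hlow.trans (by gcongr)
  rw [div_sub_one hq1.ne', div_lt_div_iff₀ hq1 hq0] at this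
  nlinarith

lemma not_hasUniqueExpansion_of_sq_le (hq : 1 < q) (hqG : q ^ 2 ≤ q + 1) {x : ℝ}
    (hx0 : 0 < x) (hx1 : x < 1) : ¬ HasUniqueExpansion q x := by
  intro hx
  obtain ⟨d, hd⟩ := hx.exists
  have hq2 : q ≤ 2 := by nlinarith
  have hbig : 1 ≤ 1 / (q - 1) := by rw [le_div_iff₀ (by linarith)]; linarith
  have hone : ∃ n, d n = 1 := by
    by_contra! h
    have hzero : d = fun _ => 0 := funext fun n => by have := hd.1 n; have := h n; omega
    simp [hd.2, hzero, seqVal] at hx0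
  classical
  have hones : ∀ k, Nat.find hone ≤ k → d k = 1 := fun k hk => by
    induction k, hk using Nat.le_induction with
    | base => exact Nat.find_spec hone
    | succ k _ ih => exact digit_succ_eq_one_of_sq_le hq hqG hx hd ih
  rcases hm : Nat.find hone with _ | m
  · have : d = fun _ => 1 := funext fun k => hones k (by omega)
    rw [hd.2, this, seqVal_const_one hq] at hx1
    linarith
  · have hdm : d m = 0 := by
      have := Nat.find_min hone (show m < Nat.find hone by omega)
      have := hd.1 m
      omega
    have htail : (fun j => d (m + 1 + j)) = fun _ => 1 := funext fun j => hones _ (by omega)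
    have := tail_lt_one_of_digit_eq_zero hq hq2 hx hd hdm
    rw [htail, seqVal_const_one hq] at this
    linarith

lemma IsBaseSeq.apply_one_sq {τ : ℕ → ℕ} {Q : ℕ → ℝ} (hτ : IsThueMorse τ) (hQ : IsBaseSeq τ Q) :
    Q 1 ^ 2 = Q 1 + 1 := by
  obtain ⟨hτ0, hτeven, hτodd⟩ := hτ
  have hτ1 : τ 1 = 1 := by simpa [hτ0] using hτodd 0
  have hτ2 : τ 2 = 1 := by simpa [hτ1] using hτeven 1
  obtain ⟨hQ1, -, hsum⟩ := hQ.2 1 le_rfl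
  have hQ0 : Q 1 ≠ 0 := by positivity
  norm_num [Finset.sum_range_succ, hτ1, hτ2] at hsum
  field_simp at hsum
  exact hsum

/-- `D_1 ∩ (0, 1) = ∅`. -/
theorem D_one_inter_Ioo (τ : ℕ → ℕ) (hτ : IsThueMorse τ)
    (Q : ℕ → ℝ) (hQ : IsBaseSeq τ Q) :
    D Q 1 ∩ Set.Ioo 0 1 = ∅ := by
  have hQG := hQ.apply_one_sq hτ
  refine Set.eq_empty_of_forall_notMem fun x ⟨hxD, hx0, hx1⟩ => ?_
  simp only [D, Nat.sub_self, hQ.1, Set.mem_iUnion, Set.mem_Ioc, exists_prop] at hxD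
  obtain ⟨q, ⟨hq, hqQ⟩, -, hxu⟩ := hxD
  have hqG : q ^ 2 ≤ q + 1 := by
    nlinarith [mul_nonneg (sub_nonneg.2 hqQ) (by linarith : (0 : ℝ) ≤ q + Q 1 - 1)]
  exact not_hasUniqueExpansion_of_sq_le hq hqG hx0 hx1 hxu
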